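/- Let H be an adjacency k-resolved connected graph of order n₂ and let G be a connected graph with at least two vertices, of order n₁, having t₁ true twin equivalence classes and diameter D(G) < k. If dim_l(G) = n₁ − t₁, then dim_l(G ⊠ H) = n₂(n₁ − t₁). -/

import Mathlib

/-!
Distances in `G ⊠ H` are the maxima of the coordinate distances.

Upper bound: if `S` is a local metric generator of `G`, then `S × V(H)` is one of `G ⊠ H`. An
edge moving only in `G` is resolved inside its copy of `G`; an edge `(u, b) ~ (v, c)` with
`b ~ c` in `H` is resolved by `(s, w)` for any `s ∈ S`, where `w` comes from adjacency
`k`-resolvedness: both `d_H(b, w)` and `d_H(c, w)` are at least `k - 1 ≥ D(G)`, so they are the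
distances in `G ⊠ H`, and they differ.

Lower bound: true twins are adjacent and equidistant from every other vertex, so a local metric
generator misses at most one vertex of each true twin class, and `dim_l ≥ n - t`. The true twin
classes of `G ⊠ H` are products of classes of `G` and `H`, and `H` has only singleton classes,
since `k ≥ D(G) + 1 ≥ 2` (the `w` above then separates any two adjacent vertices of `H`). Hence
`t(G ⊠ H) = t₁ n₂` and `dim_l(G ⊠ H) ≥ n₁ n₂ - t₁ n₂`.
-/

open SimpleGraph

/-- The strong product of two simple graphs. -/
def strongProd {α β : Type*} (G : SimpleGraph α) (H : SimpleGraph β) :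
    SimpleGraph (α × β) where
  Adj x y := (x.1 = y.1 ∧ H.Adj x.2 y.2) ∨ (x.2 = y.2 ∧ G.Adj x.1 y.1) ∨
      (G.Adj x.1 y.1 ∧ H.Adj x.2 y.2)
  symm := by
    constructor
    rintro x y (⟨h1, h2⟩ | ⟨h1, h2⟩ | ⟨h1, h2⟩)
    · exact Or.inl ⟨h1.symm, h2.symm⟩
    · exact Or.inr (Or.inl ⟨h1.symm, h2.symm⟩)
    · exact Or.inr (Or.inr ⟨h1.symm, h2.symm⟩)
  loopless := by
    constructor
    rintro x (⟨_, h⟩ | ⟨_, h⟩ | ⟨h, _⟩)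
    · exact H.irrefl h
    · exact G.irrefl h
    · exact G.irrefl h

/-- A set `S` is a local metric generator for `G` if every pair of adjacent
vertices is distinguished by some element of `S`. -/
def IsLocalMetricGenerator {α : Type*} (G : SimpleGraph α) (S : Set α) : Prop :=
  ∀ u v : α, G.Adj u v → ∃ s ∈ S, G.dist u s ≠ G.dist v s

/-- The local metric dimension of a graph. -/
noncomputable def localMetricDim {α : Type*} [Fintype α] (G : SimpleGraph α) : ℕ :=
  sInf {n | ∃ S : Finset α, S.card = n ∧ IsLocalMetricGenerator G ↑S}

/-- A set `S` is a metric generator for `G` if every pair of distinct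
vertices is distinguished by some element of `S`. -/
def IsMetricGenerator {α : Type*} (G : SimpleGraph α) (S : Set α) : Prop :=
  ∀ u v : α, u ≠ v → ∃ s ∈ S, G.dist u s ≠ G.dist v s

/-- The metric dimension of a graph. -/
noncomputable def metricDim {α : Type*} [Fintype α] (G : SimpleGraph α) : ℕ :=
  sInf {n | ∃ S : Finset α, S.card = n ∧ IsMetricGenerator G ↑S}

/-- The eccentricity of a vertex: the maximum distance to another vertex. -/
noncomputable def eccentricity {α : Type*} (G : SimpleGraph α) (v : α) : ℕ :=
  sSup {d | ∃ u, G.dist v u = d}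

/-- The diameter of a graph: maximum eccentricity. -/
noncomputable def graphDiam {α : Type*} (G : SimpleGraph α) : ℕ :=
  sSup {d | ∃ v, eccentricity G v = d}

/-- The radius of a graph: minimum eccentricity. -/
noncomputable def graphRadius {α : Type*} (G : SimpleGraph α) : ℕ :=
  sInf {d | ∃ v, eccentricity G v = d}

/-- The interval `I[x,y]`: vertices lying on some shortest `x`–`y` path. -/
def interval {α : Type*} (G : SimpleGraph α) (x y : α) : Set α :=
  {w | G.dist x w + G.dist w y = G.dist x y}

/-- A graph is adjacency `k`-resolved if for every pair of adjacent vertices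
`x, y` there is a vertex `w` with `d(y,w) ≥ k` and `x ∈ I[y,w]`, or
`d(x,w) ≥ k` and `y ∈ I[x,w]`. -/
def AdjKResolved {α : Type*} (G : SimpleGraph α) (k : ℕ) : Prop :=
  ∀ x y : α, G.Adj x y →
    ∃ w : α, (k ≤ G.dist y w ∧ x ∈ interval G y w) ∨
      (k ≤ G.dist x w ∧ y ∈ interval G x w)

/-- The true twin equivalence relation: `u ≈ v` iff `N[u] = N[v]`. -/
def trueTwinSetoid {α : Type*} (G : SimpleGraph α) : Setoid α where
  r u v := insert u (G.neighborSet u) = insert v (G.neighborSet v)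
  iseqv := ⟨fun _ => rfl, Eq.symm, Eq.trans⟩

section Distance

variable {α β : Type*} {G : SimpleGraph α} {H : SimpleGraph β}

lemma edist_le_edist_of_forall_adj {f : α → β}
    (hf : ∀ ⦃u v⦄, G.Adj u v → H.edist (f u) (f v) ≤ 1) (u v : α) :
    H.edist (f u) (f v) ≤ G.edist u v := by
  by_cases huv : G.Reachable u v
  · obtain ⟨p, hp⟩ := huv.exists_walk_length_eq_edist
    rw [← hp]
    clear hp huv
    induction p with
    | nil => simp
    | cons h p ih =>
      calc H.edist _ _ ≤ H.edist _ _ + H.edist _ _ := H.edist_triangle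
        _ ≤ 1 + p.length := add_le_add (hf h) ih
        _ = _ := by simp [add_comm]
  · simp [edist_eq_top_of_not_reachable huv]

lemma exists_edist_le_one_edist_le {a c : α} {n : ℕ} (h : G.edist a c ≤ n + 1) :
    ∃ a', G.edist a a' ≤ 1 ∧ G.edist a' c ≤ n := by
  by_cases hac : a = c
  · exact ⟨a, by simp, by simp [hac]⟩
  obtain ⟨m, hm⟩ := ENat.ne_top_iff_exists.mp (ne_top_of_le_ne_top (by simp) h)
  obtain ⟨p, hp⟩ := exists_walk_of_edist_eq_coe hm.symm
  cases p with
  | nil => exact absurd rfl hac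
  | cons hadj q =>
    refine ⟨_, (edist_eq_one_iff_adj.mpr hadj).le, (edist_le q).trans ?_⟩
    have hq : q.length + 1 ≤ n + 1 := by
      rw [Walk.length_cons] at hp
      exact_mod_cast hp ▸ hm ▸ h
    exact_mod_cast Nat.le_of_succ_le_succ hq

@[simp]
lemma strongProd_adj {a c : α} {b d : β} :
    (strongProd G H).Adj (a, b) (c, d) ↔
      (a = c ∧ H.Adj b d) ∨ (b = d ∧ G.Adj a c) ∨ (G.Adj a c ∧ H.Adj b d) :=
  Iff.rfl

lemma edist_strongProd_le_one {a c : α} {b d : β} (h₁ : G.edist a c ≤ 1)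
    (h₂ : H.edist b d ≤ 1) : (strongProd G H).edist (a, b) (c, d) ≤ 1 := by
  rw [edist_le_one_iff_adj_or_eq] at *
  rcases h₁ with h₁ | rfl <;> rcases h₂ with h₂ | rfl <;> simp_all

lemma edist_strongProd_le_of_le (n : ℕ) {a c : α} {b d : β} (h₁ : G.edist a c ≤ n)
    (h₂ : H.edist b d ≤ n) : (strongProd G H).edist (a, b) (c, d) ≤ n := by
  induction n generalizing a b with
  | zero =>
    simp only [Nat.cast_zero, nonpos_iff_eq_zero, edist_eq_zero_iff] at h₁ h₂ ⊢
    rw [h₁, h₂]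
  | succ n ih =>
    obtain ⟨a', ha, ha'⟩ := exists_edist_le_one_edist_le (by exact_mod_cast h₁)
    obtain ⟨b', hb, hb'⟩ := exists_edist_le_one_edist_le (by exact_mod_cast h₂)
    calc (strongProd G H).edist (a, b) (c, d)
        ≤ (strongProd G H).edist (a, b) (a', b') + (strongProd G H).edist (a', b') (c, d) :=
          SimpleGraph.edist_triangle
      _ ≤ 1 + n := add_le_add (edist_strongProd_le_one ha hb) (ih ha' hb')
      _ = (n + 1 : ℕ) := by push_cast; ring

lemma edist_strongProd (a c : α) (b d : β) :
    (strongProd G H).edist (a, b) (c, d) = max (G.edist a c) (H.edist b d) := by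
  refine le_antisymm ?_ (max_le ?_ ?_)
  · rcases eq_or_ne (max (G.edist a c) (H.edist b d)) ⊤ with h | h
    · simp [h]
    · obtain ⟨n, hn⟩ := ENat.ne_top_iff_exists.mp h
      rw [← hn]
      exact edist_strongProd_le_of_le n (hn ▸ le_max_left _ _) (hn ▸ le_max_right _ _)
  · refine edist_le_edist_of_forall_adj (f := Prod.fst) (fun x y hxy => ?_) (a, b) (c, d)
    rw [edist_le_one_iff_adj_or_eq]
    rcases hxy with ⟨h, -⟩ | ⟨-, h⟩ | ⟨h, -⟩ <;> tauto
  · refine edist_le_edist_of_forall_adj (f := Prod.snd) (fun x y hxy => ?_) (a, b) (c, d)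
    rw [edist_le_one_iff_adj_or_eq]
    rcases hxy with ⟨-, h⟩ | ⟨h, -⟩ | ⟨-, h⟩ <;> tauto

lemma connected_strongProd (hG : G.Connected) (hH : H.Connected) :
    (strongProd G H).Connected := by
  have := hG.nonempty
  have := hH.nonempty
  refine ⟨fun ⟨a, b⟩ ⟨c, d⟩ => edist_ne_top_iff_reachable.mp ?_⟩
  rw [edist_strongProd]
  exact (max_lt (edist_ne_top_iff_reachable.mpr (hG.preconnected a c)).lt_top
    (edist_ne_top_iff_reachable.mpr (hH.preconnected b d)).lt_top).ne

lemma dist_strongProd (hG : G.Connected) (hH : H.Connected) (a c : α) (b d : β) :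
    (strongProd G H).dist (a, b) (c, d) = max (G.dist a c) (H.dist b d) := by
  have h := ((connected_strongProd hG hH).preconnected (a, b) (c, d)).coe_dist_eq_edist
  rw [edist_strongProd, ← (hG.preconnected a c).coe_dist_eq_edist,
    ← (hH.preconnected b d).coe_dist_eq_edist, ← Nat.mono_cast.map_max] at h
  exact_mod_cast h

end Distance

lemma SimpleGraph.Connected.exists_adj {α : Type*} [Nontrivial α] {G : SimpleGraph α}
    (hG : G.Connected) : ∃ u v, G.Adj u v :=
  ⟨_, hG.preconnected.exists_adj_of_nontrivial (Classical.arbitrary α)⟩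

section Diameter

variable {α : Type*} [Finite α] {G : SimpleGraph α}

lemma dist_le_graphDiam (u v : α) : G.dist u v ≤ graphDiam G :=
  calc G.dist u v ≤ eccentricity G u :=
        le_csSup (Set.finite_range (G.dist u)).bddAbove ⟨v, rfl⟩
    _ ≤ graphDiam G :=
        le_csSup (Set.finite_range (eccentricity G)).bddAbove ⟨u, rfl⟩

lemma one_le_graphDiam [Nontrivial α] (hG : G.Connected) : 1 ≤ graphDiam G := by
  obtain ⟨u, v, huv⟩ := hG.exists_adj
  exact dist_eq_one_iff_adj.mpr huv ▸ dist_le_graphDiam u v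

end Diameter

section TrueTwins

variable {α β : Type*} {G : SimpleGraph α} {H : SimpleGraph β}

lemma edist_le_one_iff_mem_insert_neighborSet {u w : α} :
    G.edist u w ≤ 1 ↔ w ∈ insert u (G.neighborSet u) := by
  rw [edist_le_one_iff_adj_or_eq, Set.mem_insert_iff, mem_neighborSet, eq_comm, or_comm]

lemma adj_of_trueTwin {u v : α} (h : (trueTwinSetoid G).r u v) (hne : u ≠ v) : G.Adj u v := by
  have hv : v ∈ insert u (G.neighborSet u) := h ▸ Set.mem_insert v _
  exact (Set.mem_insert_iff.mp hv).resolve_left hne.symm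

lemma edist_le_edist_of_trueTwin {u v s : α} (h : (trueTwinSetoid G).r u v) (hs : s ≠ u) :
    G.edist v s ≤ G.edist u s := by
  rcases eq_or_ne (G.edist u s) ⊤ with htop | htop
  · simp [htop]
  obtain ⟨m, hm⟩ := ENat.ne_top_iff_exists.mp htop
  obtain ⟨n, rfl⟩ : ∃ n, m = n + 1 :=
    Nat.exists_eq_add_one.mpr (by exact_mod_cast hm ▸ edist_pos_of_ne hs.symm)
  have hus : G.edist u s = n + 1 := by rw [← hm]; push_cast; rfl
  obtain ⟨w, huw, hws⟩ := exists_edist_le_one_edist_le hus.le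
  have hvw : G.edist v w ≤ 1 := by
    rw [edist_le_one_iff_mem_insert_neighborSet, ← show _ = _ from h,
      ← edist_le_one_iff_mem_insert_neighborSet]
    exact huw
  calc G.edist v s ≤ G.edist v w + G.edist w s := SimpleGraph.edist_triangle
    _ ≤ 1 + n := add_le_add hvw hws
    _ = G.edist u s := by rw [hus, add_comm]

lemma dist_eq_of_trueTwin {u v s : α} (h : (trueTwinSetoid G).r u v) (hu : s ≠ u) (hv : s ≠ v) :
    G.dist u s = G.dist v s :=
  congrArg ENat.toNat <| le_antisymm
    (edist_le_edist_of_trueTwin ((trueTwinSetoid G).symm' h) hv) (edist_le_edist_of_trueTwin h hu)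

lemma insert_neighborSet_strongProd (x : α × β) :
    insert x ((strongProd G H).neighborSet x) =
      insert x.1 (G.neighborSet x.1) ×ˢ insert x.2 (H.neighborSet x.2) := by
  obtain ⟨a, b⟩ := x
  ext ⟨c, d⟩
  simp only [← edist_le_one_iff_mem_insert_neighborSet, Set.mem_prod, edist_strongProd,
    max_le_iff]

lemma trueTwinSetoid_strongProd :
    trueTwinSetoid (strongProd G H) = (trueTwinSetoid G).prod (trueTwinSetoid H) := by
  refine Setoid.ext fun x y => ?_
  change insert x _ = insert y _ ↔ insert x.1 _ = insert y.1 _ ∧ insert x.2 _ = insert y.2 _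
  rw [insert_neighborSet_strongProd, insert_neighborSet_strongProd]
  exact Set.prod_eq_prod_iff_of_nonempty ⟨x, Set.mem_insert _ _, Set.mem_insert _ _⟩

lemma card_trueTwinQuotient_strongProd :
    Nat.card (Quotient (trueTwinSetoid (strongProd G H))) =
      Nat.card (Quotient (trueTwinSetoid G)) * Nat.card (Quotient (trueTwinSetoid H)) := by
  rw [trueTwinSetoid_strongProd, ← Nat.card_prod]
  exact Nat.card_congr (Setoid.prodQuotientEquiv _ _).symm

end TrueTwins

section LocalMetricDimension

variable {α : Type*} {G : SimpleGraph α}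

lemma isLocalMetricGenerator_univ : IsLocalMetricGenerator G Set.univ :=
  fun u v huv => ⟨u, trivial, by simp [dist_eq_one_iff_adj.mpr huv.symm]⟩

lemma IsLocalMetricGenerator.nonempty {S : Set α} (hS : IsLocalMetricGenerator G S) {u v : α}
    (huv : G.Adj u v) : S.Nonempty :=
  let ⟨s, hs, _⟩ := hS u v huv
  ⟨s, hs⟩

lemma exists_isLocalMetricGenerator_card_eq_localMetricDim [Fintype α] (G : SimpleGraph α) :
    ∃ S : Finset α, S.card = localMetricDim G ∧ IsLocalMetricGenerator G S := by
  refine Nat.sInf_mem (s := {n | ∃ S : Finset α, S.card = n ∧ IsLocalMetricGenerator G S}) ?_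
  exact ⟨_, Finset.univ, rfl, by simpa using isLocalMetricGenerator_univ⟩

lemma localMetricDim_le_card [Fintype α] {S : Finset α} (hS : IsLocalMetricGenerator G S) :
    localMetricDim G ≤ S.card :=
  Nat.sInf_le ⟨S, rfl, hS⟩

lemma card_le_card_add_card_trueTwinQuotient [Fintype α] {T : Finset α}
    (hT : IsLocalMetricGenerator G T) :
    Fintype.card α ≤ T.card + Nat.card (Quotient (trueTwinSetoid G)) := by
  classical
  have hinj : Function.Injective
      fun x : {x // x ∉ T} => (Quotient.mk (trueTwinSetoid G) x.1) := by
    rintro ⟨x, hx⟩ ⟨y, hy⟩ hxy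
    by_contra hne
    have htwin := Quotient.exact hxy
    have hne' : x ≠ y := fun h => hne (Subtype.ext h)
    obtain ⟨s, hs, hds⟩ := hT x y (adj_of_trueTwin htwin hne')
    exact hds (dist_eq_of_trueTwin htwin (ne_of_mem_of_not_mem hs hx)
      (ne_of_mem_of_not_mem hs hy))
  have := Nat.card_le_card_of_injective _ hinj
  rw [Nat.card_eq_fintype_card, Fintype.card_subtype_compl, Fintype.card_coe] at this
  omega

lemma card_sub_card_trueTwinQuotient_le_localMetricDim [Fintype α] (G : SimpleGraph α) :
    Fintype.card α - Nat.card (Quotient (trueTwinSetoid G)) ≤ localMetricDim G := by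
  obtain ⟨T, hT, hgen⟩ := exists_isLocalMetricGenerator_card_eq_localMetricDim G
  have := card_le_card_add_card_trueTwinQuotient hgen
  omega

end LocalMetricDimension

section AdjacencyResolved

variable {β : Type*} {H : SimpleGraph β} {k : ℕ}

lemma AdjKResolved.exists_dist_ne (hres : AdjKResolved H k) {b c : β} (hbc : H.Adj b c) :
    ∃ w, k ≤ H.dist b w + 1 ∧ k ≤ H.dist c w + 1 ∧ H.dist b w ≠ H.dist c w := by
  have hbc' : H.dist b c = 1 := dist_eq_one_iff_adj.mpr hbc
  obtain ⟨w, ⟨hk, hw⟩ | ⟨hk, hw⟩⟩ := hres b c hbc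
  · have hw : H.dist c b + H.dist b w = H.dist c w := hw
    rw [dist_comm, hbc'] at hw
    exact ⟨w, by omega, by omega, by omega⟩
  · have hw : H.dist b c + H.dist c w = H.dist b w := hw
    exact ⟨w, by omega, by omega, by omega⟩

lemma AdjKResolved.eq_of_trueTwin (hres : AdjKResolved H k) (hk : 2 ≤ k) {b c : β}
    (h : (trueTwinSetoid H).r b c) : b = c := by
  by_contra hne
  obtain ⟨w, hbw, hcw, hdist⟩ := hres.exists_dist_ne (adj_of_trueTwin h hne)
  refine hdist (dist_eq_of_trueTwin h ?_ ?_) <;>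
  · rintro rfl
    simp only [dist_self] at hbw hcw
    omega

lemma AdjKResolved.card_trueTwinQuotient (hres : AdjKResolved H k) (hk : 2 ≤ k) :
    Nat.card (Quotient (trueTwinSetoid H)) = Nat.card β :=
  Nat.card_congr (Equiv.ofBijective _
    ⟨fun _ _ h => hres.eq_of_trueTwin hk (Quotient.exact h), Quotient.mk_surjective⟩).symm

end AdjacencyResolved

section StrongProductUpperBound

variable {α β : Type*} {G : SimpleGraph α} {H : SimpleGraph β} {k : ℕ}

lemma isLocalMetricGenerator_strongProd [Finite α] (hG : G.Connected) (hH : H.Connected)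
    (hres : AdjKResolved H k) (hD : graphDiam G < k) {S : Set α}
    (hS : IsLocalMetricGenerator G S) (hSne : S.Nonempty) :
    IsLocalMetricGenerator (strongProd G H) (S ×ˢ Set.univ) := by
  obtain ⟨s₀, hs₀⟩ := hSne
  rintro ⟨u, b⟩ ⟨v, c⟩ hadj
  by_cases hbc : H.Adj b c
  · obtain ⟨w, hbw, hcw, hne⟩ := hres.exists_dist_ne hbc
    refine ⟨(s₀, w), ⟨hs₀, trivial⟩, ?_⟩
    have hu := dist_le_graphDiam (G := G) u s₀
    have hv := dist_le_graphDiam (G := G) v s₀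
    rw [dist_strongProd hG hH, dist_strongProd hG hH]
    omega
  · obtain ⟨rfl, huv⟩ : b = c ∧ G.Adj u v := by simpa [hbc] using hadj
    obtain ⟨s, hs, hne⟩ := hS u v huv
    refine ⟨(s, b), ⟨hs, trivial⟩, ?_⟩
    simpa [dist_strongProd hG hH] using hne

lemma localMetricDim_strongProd_le [Fintype α] [Fintype β] [Nontrivial α] (hG : G.Connected)
    (hH : H.Connected) (hres : AdjKResolved H k) (hD : graphDiam G < k) :
    localMetricDim (strongProd G H) ≤ localMetricDim G * Fintype.card β := by
  obtain ⟨S, hcard, hS⟩ := exists_isLocalMetricGenerator_card_eq_localMetricDim G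
  obtain ⟨u, v, huv⟩ := hG.exists_adj
  have hSH := isLocalMetricGenerator_strongProd hG hH hres hD hS (hS.nonempty huv)
  calc localMetricDim (strongProd G H) ≤ (S ×ˢ (Finset.univ : Finset β)).card :=
        localMetricDim_le_card (by simpa using hSH)
    _ = localMetricDim G * Fintype.card β := by rw [Finset.card_product, hcard, Finset.card_univ]

end StrongProductUpperBound

/-- if `H` is adjacency `k`-resolved, `D(G) < k` and
`dim_l(G) = n₁ − t₁`, then `dim_l(G ⊠ H) = n₂(n₁ − t₁)`. -/
theorem stmt9 {α β : Type*} [Fintype α] [Fintype β]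
    (G : SimpleGraph α) (H : SimpleGraph β)
    (hH : H.Connected) (k : ℕ) (hres : AdjKResolved H k)
    (hG : G.Connected) (hn1 : 2 ≤ Fintype.card α)
    (t1 : ℕ) (ht1 : Nat.card (Quotient (trueTwinSetoid G)) = t1)
    (hD : graphDiam G < k)
    (hdimG : localMetricDim G = Fintype.card α - t1) :
    localMetricDim (strongProd G H) =
      Fintype.card β * (Fintype.card α - t1) := by
  have : Nontrivial α := Fintype.one_lt_card_iff_nontrivial.mp hn1
  have hk : 2 ≤ k := by have := one_le_graphDiam hG; omega
  refine le_antisymm ?_ ?_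
  · calc localMetricDim (strongProd G H) ≤ localMetricDim G * Fintype.card β :=
          localMetricDim_strongProd_le hG hH hres hD
      _ = Fintype.card β * (Fintype.card α - t1) := by rw [hdimG, mul_comm]
  · calc Fintype.card β * (Fintype.card α - t1)
        = Fintype.card (α × β) - Nat.card (Quotient (trueTwinSetoid (strongProd G H))) := by
          rw [card_trueTwinQuotient_strongProd, ht1, hres.card_trueTwinQuotient hk,
            Nat.card_eq_fintype_card, Fintype.card_prod, Nat.mul_sub, Nat.mul_comm t1,
            Nat.mul_comm (Fintype.card α)]
      _ ≤ localMetricDim (strongProd G H) :=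
          card_sub_card_trueTwinQuotient_le_localMetricDim _
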